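/- A ring R is local if and only if R = U(R) ∪ √Δ(R), i.e., every element of R is either a unit or lies in √Δ(R). -/

import Mathlib

/-- Δ(R) = {x : 1 - x*u is a unit for every unit u}. -/
def Delta (R : Type*) [Ring R] : Set R :=
  {x | ∀ u : R, IsUnit u → IsUnit (1 - x * u)}

/-- √Δ(R) = {x : x^n ∈ Δ(R) for some n ≥ 1}. -/
def sqrtDelta (R : Type*) [Ring R] : Set R :=
  {x | ∃ n : ℕ, 1 ≤ n ∧ x ^ n ∈ Delta R}

theorem IsLocalRing.mem_delta_of_not_isUnit {R : Type*} [Ring R] [IsLocalRing R] {a : R}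
    (ha : ¬IsUnit a) : a ∈ Delta R := by
  intro u hu
  exact (isUnit_or_isUnit_of_add_one (add_sub_cancel (a * u) 1)).resolve_left
    fun hau => ha (hu.mul_right_iff.mp hau)

theorem isUnit_one_sub_of_mem_delta {R : Type*} [Ring R] {x : R} (hx : x ∈ Delta R) :
    IsUnit (1 - x) := by
  simpa using hx 1 isUnit_one

-- `(1 - a) * s = 1 - a ^ n = s * (1 - a)` for the geometric sum `s`,
-- and a unit product of commuting factors has unit factors.
theorem isUnit_one_sub_of_isUnit_one_sub_pow {R : Type*} [Ring R] {a : R} {n : ℕ}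
    (h : IsUnit (1 - a ^ n)) : IsUnit (1 - a) := by
  have hcomm : Commute (1 - a) (∑ i ∈ Finset.range n, a ^ i) :=
    (mul_neg_geom_sum a n).trans (geom_sum_mul_neg a n).symm
  rw [← mul_neg_geom_sum] at h
  exact (hcomm.isUnit_mul_iff.mp h).1

theorem isUnit_one_sub_of_mem_sqrtDelta {R : Type*} [Ring R] {a : R} (ha : a ∈ sqrtDelta R) :
    IsUnit (1 - a) :=
  let ⟨_, _, han⟩ := ha
  isUnit_one_sub_of_isUnit_one_sub_pow (isUnit_one_sub_of_mem_delta han)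

theorem stmt_9 {R : Type*} [Ring R] [Nontrivial R] :
    IsLocalRing R ↔ ∀ a : R, IsUnit a ∨ a ∈ sqrtDelta R := by
  constructor
  · intro _ a
    refine (em (IsUnit a)).imp_right fun ha => ⟨1, le_rfl, ?_⟩
    simpa using IsLocalRing.mem_delta_of_not_isUnit ha
  · intro h
    exact IsLocalRing.of_isUnit_or_isUnit_one_sub_self fun a =>
      (h a).imp_right isUnit_one_sub_of_mem_sqrtDelta
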